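/- Let d ≥ 1 be an integer. Let u : ℝ^d → ℝ be continuously differentiable with compact support, and let c : ℝ^d → ℝ be twice continuously differentiable with −Δc(x) = u(x) for every x ∈ ℝ^d. Then ∫_{ℝ^d} u(x) ∇c(x) · ∇u(x) dx = (1/2) ∫_{ℝ^d} u(x)³ dx. -/

import Mathlib

open MeasureTheory

/-!
Writing `u ∂ᵥu = ½ ∂ᵥ(u²)` and integrating by parts in each direction of an orthonormal basis moves
the derivative onto `∂ᵥc`, so `∫ u ∇c · ∇u = -½ ∫ u² Δc = ½ ∫ u³`.
-/

theorem HasCompactSupport.pow {α β : Type*} [TopologicalSpace α] [MonoidWithZero β] {f : α → β}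
    (hf : HasCompactSupport f) {n : ℕ} (hn : n ≠ 0) : HasCompactSupport fun x => f x ^ n :=
  hf.comp_left (zero_pow hn)

section

variable {E : Type*} [NormedAddCommGroup E]

theorem ContDiff.fderiv_apply_const [NormedSpace ℝ E] {f : E → ℝ} {n : WithTop ℕ∞}
    (hf : ContDiff ℝ (n + 1) f) (v : E) : ContDiff ℝ n fun x => fderiv ℝ f x v :=
  (hf.fderiv_right le_rfl).clm_apply contDiff_const

theorem fderiv_sq_apply [NormedSpace ℝ E] {u : E → ℝ} {x : E} (hu : DifferentiableAt ℝ u x)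
    (v : E) : fderiv ℝ (fun y => u y ^ 2) x v = 2 * (u x * fderiv ℝ u x v) := by
  rw [fderiv_fun_pow 2 hu]
  simp only [smul_apply, smul_eq_mul]
  ring

theorem inner_gradient_eq_sum_fderiv [InnerProductSpace ℝ E] [CompleteSpace E] {ι : Type*}
    [Fintype ι] (b : OrthonormalBasis ι ℝ E) (f g : E → ℝ) (x : E) :
    inner ℝ (gradient f x) (gradient g x) = ∑ i, fderiv ℝ f x (b i) * fderiv ℝ g x (b i) := by
  rw [← b.sum_inner_mul_inner]
  simp only [inner_gradient_left, inner_gradient_right, conj_trivial]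

variable [NormedSpace ℝ E] [FiniteDimensional ℝ E] [MeasurableSpace E] [BorelSpace E]
  (μ : Measure E) [μ.IsAddHaarMeasure]

theorem integral_mul_mul_fderiv_self {u g : E → ℝ} (hu : ContDiff ℝ 1 u)
    (hus : HasCompactSupport u) (hg : ContDiff ℝ 1 g) (v : E) :
    ∫ x, u x * (g x * fderiv ℝ u x v) ∂μ = -(1 / 2) * ∫ x, u x ^ 2 * fderiv ℝ g x v ∂μ := by
  have hu2 : ContDiff ℝ 1 fun x => u x ^ 2 := hu.pow 2
  have hus2 : HasCompactSupport fun x => u x ^ 2 := hus.pow two_ne_zero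
  have hdu2 : Continuous fun x => fderiv ℝ (fun y => u y ^ 2) x v :=
    (hu2.fderiv_apply_const (n := 0) v).continuous
  have hdg : Continuous fun x => fderiv ℝ g x v := (hg.fderiv_apply_const (n := 0) v).continuous
  have hibp := integral_mul_fderiv_eq_neg_fderiv_mul_of_integrable (μ := μ)
    ((hdu2.mul hg.continuous).integrable_of_hasCompactSupport (hus2.fderiv_apply ℝ v).mul_right)
    ((hu2.continuous.mul hdg).integrable_of_hasCompactSupport hus2.mul_right)
    ((hu2.continuous.mul hg.continuous).integrable_of_hasCompactSupport hus2.mul_right)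
    (fun x _ => (hu2.differentiable one_ne_zero).differentiableAt)
    (fun x _ => (hg.differentiable one_ne_zero).differentiableAt)
  have hsq : ∫ x, fderiv ℝ (fun y => u y ^ 2) x v * g x ∂μ
      = 2 * ∫ x, u x * (g x * fderiv ℝ u x v) ∂μ := by
    rw [← integral_const_mul]
    congr 1 with x
    rw [fderiv_sq_apply (hu.differentiable one_ne_zero).differentiableAt]
    ring
  rw [hibp, hsq]
  ring

end

theorem integral_mul_inner_gradient_eq_half_integral_cube {E ι : Type*} [NormedAddCommGroup E]
    [InnerProductSpace ℝ E] [FiniteDimensional ℝ E] [MeasurableSpace E] [BorelSpace E]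
    (μ : Measure E) [μ.IsAddHaarMeasure] [Fintype ι] (b : OrthonormalBasis ι ℝ E)
    {u c : E → ℝ} (hu : ContDiff ℝ 1 u) (hus : HasCompactSupport u) (hc : ContDiff ℝ 2 c)
    (hlap : ∀ x, -∑ i, fderiv ℝ (fun y => fderiv ℝ c y (b i)) x (b i) = u x) :
    ∫ x, u x * inner ℝ (gradient c x) (gradient u x) ∂μ = (1 / 2) * ∫ x, u x ^ 3 ∂μ := by
  have hdc : ∀ i, ContDiff ℝ 1 fun x => fderiv ℝ c x (b i) := fun i => hc.fderiv_apply_const _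
  have hdu : ∀ i, Continuous fun x => fderiv ℝ u x (b i) :=
    fun i => (hu.fderiv_apply_const (n := 0) _).continuous
  have hdd : ∀ i, Continuous fun x => fderiv ℝ (fun y => fderiv ℝ c y (b i)) x (b i) :=
    fun i => ((hdc i).fderiv_apply_const (n := 0) _).continuous
  calc ∫ x, u x * inner ℝ (gradient c x) (gradient u x) ∂μ
      = ∑ i, ∫ x, u x * (fderiv ℝ c x (b i) * fderiv ℝ u x (b i)) ∂μ := by
        simp_rw [inner_gradient_eq_sum_fderiv b, Finset.mul_sum]
        refine integral_finsetSum _ fun i _ => ?_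
        exact (hu.continuous.mul ((hdc i).continuous.mul (hdu i))).integrable_of_hasCompactSupport
          hus.mul_right
    _ = -(1 / 2) * ∑ i, ∫ x, u x ^ 2 * fderiv ℝ (fun y => fderiv ℝ c y (b i)) x (b i) ∂μ := by
        rw [Finset.mul_sum]
        exact Finset.sum_congr rfl fun i _ => integral_mul_mul_fderiv_self μ hu hus (hdc i) _
    _ = -(1 / 2) * ∫ x, u x ^ 2 * -u x ∂μ := by
        rw [← integral_finsetSum]
        · simp_rw [← Finset.mul_sum, ← hlap, neg_neg]
        · exact fun i _ => ((hu.continuous.pow 2).mul (hdd i)).integrable_of_hasCompactSupport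
            (hus.pow two_ne_zero).mul_right
    _ = (1 / 2) * ∫ x, u x ^ 3 ∂μ := by
        simp_rw [← neg_mul_eq_mul_neg, integral_neg, ← pow_succ]
        ring

theorem keller_segel_cancellation_general (d : ℕ)
    (u c : EuclideanSpace ℝ (Fin d) → ℝ)
    (hu : ContDiff ℝ 1 u) (husupp : HasCompactSupport u)
    (hc : ContDiff ℝ 2 c)
    (hlap : ∀ x : EuclideanSpace ℝ (Fin d),
      -(∑ i : Fin d, fderiv ℝ (fun y => fderiv ℝ c y (EuclideanSpace.single i 1)) x
          (EuclideanSpace.single i 1)) = u x) :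
    ∫ x : EuclideanSpace ℝ (Fin d), u x * (inner ℝ (gradient c x) (gradient u x) : ℝ)
      = (1 / 2) * ∫ x : EuclideanSpace ℝ (Fin d), (u x) ^ 3 :=
  integral_mul_inner_gradient_eq_half_integral_cube volume (EuclideanSpace.basisFun (Fin d) ℝ)
    hu husupp hc (by simpa only [EuclideanSpace.basisFun_apply] using hlap)

/-- If `u` is `C¹` with compact support, `c` is `C²` and `−Δc = u`
pointwise on `ℝ^d`, then `∫ u ∇c · ∇u dx = (1/2) ∫ u³ dx`. -/
theorem keller_segel_cancellation (d : ℕ) (hd : 1 ≤ d)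
    (u c : EuclideanSpace ℝ (Fin d) → ℝ)
    (hu : ContDiff ℝ 1 u) (husupp : HasCompactSupport u)
    (hc : ContDiff ℝ 2 c)
    (hlap : ∀ x : EuclideanSpace ℝ (Fin d),
      -(∑ i : Fin d, fderiv ℝ (fun y => fderiv ℝ c y (EuclideanSpace.single i 1)) x
          (EuclideanSpace.single i 1)) = u x) :
    ∫ x : EuclideanSpace ℝ (Fin d), u x * (inner ℝ (gradient c x) (gradient u x) : ℝ)
      = (1 / 2) * ∫ x : EuclideanSpace ℝ (Fin d), (u x) ^ 3 :=
  keller_segel_cancellation_general d u c hu husupp hc hlap
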